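/- arXiv:2002.04534 — 4 statements merged into one kernel-verified Lean document; each statement's English description precedes it below -/
import Mathlib

section
/- The polynomial φ₀ = 3 + μ₁² + μ₂² + μ₃² + (1/√3)μ₁μ₂μ₃ satisfies the toric nearly Kähler equation: det Hess φ₀ = (8/3)φ₀ − (11/3)∂_r φ₀ + ∂_r² φ₀ holds as an identity of polynomials. -/
/-!
Split `φ₀ = 3 + Q + c P` with `Q = μ₁² + μ₂² + μ₃²`, `P = μ₁μ₂μ₃`, `c = 1/√3` into homogeneous
parts. By Euler's identity `∂_r` multiplies a homogeneous polynomial of degree `n` by `n`, so the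
right-hand side of the equation multiplies it by `(n - 1)(3n - 8)/3`, giving `8 - (2/3) Q + (2/3) c P`.
The Hessian is `2` on the diagonal and `c μₖ` off it, with determinant `8 - 2c² Q + 2c³ P`; the two
sides agree because `c² = 1/3`.
-/

open MvPolynomial

/-- The determinant of the Hessian matrix of second partial derivatives of a
polynomial in three variables. -/
noncomputable def hessDet (φ : MvPolynomial (Fin 3) ℝ) : MvPolynomial (Fin 3) ℝ :=
  (Matrix.of fun i j : Fin 3 => pderiv i (pderiv j φ)).det

/-- The Euler operator `∂_r φ = μ₁ ∂φ/∂μ₁ + μ₂ ∂φ/∂μ₂ + μ₃ ∂φ/∂μ₃`. -/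
noncomputable def eulerOp (φ : MvPolynomial (Fin 3) ℝ) : MvPolynomial (Fin 3) ℝ :=
  ∑ i : Fin 3, X i * pderiv i φ

/-- The toric nearly Kähler equation `det Hess φ = (8/3)φ − (11/3)∂_r φ + ∂_r² φ`. -/
def IsTNKSolution (φ : MvPolynomial (Fin 3) ℝ) : Prop :=
  hessDet φ = C (8/3) * φ - C (11/3) * eulerOp φ + eulerOp (eulerOp φ)

/-- The model cubic solution `φ₀ = 3 + μ₁² + μ₂² + μ₃² + (1/√3) μ₁μ₂μ₃`. -/
noncomputable def φ₀ : MvPolynomial (Fin 3) ℝ :=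
  C 3 + X 0 ^ 2 + X 1 ^ 2 + X 2 ^ 2 + C (1 / Real.sqrt 3) * (X 0 * X 1 * X 2)

theorem pderiv_ofNat {σ R : Type*} [CommSemiring R] (i : σ) (n : ℕ) [n.AtLeastTwo] :
    pderiv i (no_index (OfNat.ofNat n) : MvPolynomial σ R) = 0 :=
  (pderiv i).map_natCast n

section EulerOperator

variable (p q : MvPolynomial (Fin 3) ℝ)

theorem eulerOp_add : eulerOp (p + q) = eulerOp p + eulerOp q := by
  simp only [eulerOp, map_add, mul_add, Finset.sum_add_distrib]

theorem eulerOp_smul (a : ℝ) : eulerOp (a • p) = a • eulerOp p := by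
  simp only [eulerOp, Derivation.map_smul, mul_smul_comm, Finset.smul_sum]

theorem eulerOp_of_isHomogeneous {p : MvPolynomial (Fin 3) ℝ} {n : ℕ} (h : p.IsHomogeneous n) :
    eulerOp p = (n : ℝ) • p := by
  rw [eulerOp, h.sum_X_mul_pderiv, Nat.cast_smul_eq_nsmul]

noncomputable def tnkRhs : MvPolynomial (Fin 3) ℝ :=
  C (8/3) * p - C (11/3) * eulerOp p + eulerOp (eulerOp p)

theorem isTNKSolution_iff : IsTNKSolution p ↔ hessDet p = tnkRhs p := Iff.rfl

theorem tnkRhs_add : tnkRhs (p + q) = tnkRhs p + tnkRhs q := by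
  simp only [tnkRhs, eulerOp_add]
  ring

theorem tnkRhs_of_isHomogeneous {p : MvPolynomial (Fin 3) ℝ} {n : ℕ} (h : p.IsHomogeneous n) :
    tnkRhs p = ((n - 1) * (3 * n - 8) / 3 : ℝ) • p := by
  rw [tnkRhs, eulerOp_of_isHomogeneous h, eulerOp_smul, eulerOp_of_isHomogeneous h, C_mul',
    C_mul']
  module

end EulerOperator

section CubicModel

noncomputable def sumSqX : MvPolynomial (Fin 3) ℝ := X 0 ^ 2 + X 1 ^ 2 + X 2 ^ 2

noncomputable def prodX : MvPolynomial (Fin 3) ℝ := X 0 * X 1 * X 2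

noncomputable def cubicModel (a c : ℝ) : MvPolynomial (Fin 3) ℝ := C a + sumSqX + C c * prodX

theorem isHomogeneous_sumSqX : sumSqX.IsHomogeneous 2 :=
  ((isHomogeneous_X_pow 0 2).add (isHomogeneous_X_pow 1 2)).add (isHomogeneous_X_pow 2 2)

theorem isHomogeneous_prodX : prodX.IsHomogeneous 3 :=
  ((isHomogeneous_X ℝ 0).mul (isHomogeneous_X ℝ 1)).mul (isHomogeneous_X ℝ 2)

variable (a c : ℝ)

theorem tnkRhs_cubicModel :
    tnkRhs (cubicModel a c) = C (8 / 3 * a) - C (2 / 3) * sumSqX + C (2 / 3 * c) * prodX := by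
  rw [cubicModel, tnkRhs_add, tnkRhs_add, tnkRhs_of_isHomogeneous (isHomogeneous_C _ a),
    tnkRhs_of_isHomogeneous isHomogeneous_sumSqX,
    tnkRhs_of_isHomogeneous (isHomogeneous_prodX.C_mul c)]
  simp only [← C_mul', ← mul_assoc, ← map_mul]
  norm_num
  ring

theorem hessian_cubicModel :
    (Matrix.of fun i j : Fin 3 => pderiv i (pderiv j (cubicModel a c))) =
      !![2, C c * X 2, C c * X 1; C c * X 2, 2, C c * X 0; C c * X 1, C c * X 0, 2] := by
  ext i j : 1
  fin_cases i <;> fin_cases j <;>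
    simp [cubicModel, sumSqX, prodX, pderiv_X, Pi.single_apply, pderiv_ofNat]

theorem hessDet_cubicModel :
    hessDet (cubicModel a c) = 8 - C (2 * c ^ 2) * sumSqX + C (2 * c ^ 3) * prodX := by
  rw [hessDet, hessian_cubicModel, Matrix.det_fin_three]
  simp only [Matrix.of_apply, Matrix.cons_val', Matrix.cons_val_zero, Matrix.cons_val_fin_one,
    Matrix.cons_val_one, Matrix.cons_val, C_mul, map_ofNat, C_pow, sumSqX, prodX]
  ring

theorem isTNKSolution_cubicModel {c : ℝ} (hc : c ^ 2 = 1 / 3) :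
    IsTNKSolution (cubicModel 3 c) := by
  have h2 : 2 * c ^ 2 = 2 / 3 := by rw [hc]; norm_num
  have h3 : 2 * c ^ 3 = 2 / 3 * c := by rw [pow_succ, ← mul_assoc, h2]
  rw [isTNKSolution_iff, hessDet_cubicModel, tnkRhs_cubicModel, h2, h3]
  norm_num [map_ofNat]

end CubicModel

/-- The polynomial `φ₀` satisfies the toric nearly Kähler equation as a polynomial identity. -/
theorem phi0_is_TNK_solution : IsTNKSolution φ₀ := by
  have hφ₀ : φ₀ = cubicModel 3 (1 / Real.sqrt 3) := by
    rw [φ₀, cubicModel, sumSqX, prodX]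
    ring
  rw [hφ₀]
  exact isTNKSolution_cubicModel (by rw [div_pow, one_pow, Real.sq_sqrt (by norm_num)])
end

section
/- Let φ ∈ ℝ[μ₁,μ₂,μ₃] be a polynomial of degree d ≥ 4 satisfying the toric nearly Kähler equation, and let φ^d denote its top-degree homogeneous component. Then det Hess φ^d = 0 identically. -/
open MvPolynomial

/-!
The Hessian entries of `φ` have degree at most `d - 2`, and those of the top component `φ^d` are
their degree-`(d - 2)` parts; taking top components commutes with products of polynomials of
bounded degree, so `det Hess φ^d` is the degree-`3(d - 2)` component of `det Hess φ`. By Euler's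
identity `∂_r` multiplies the degree-`n` component by `n`, so the right-hand side of the equation
has no component in degree `3(d - 2) > d`.
-/

namespace MvPolynomial

variable {σ R : Type*}

section CommSemiring

variable [CommSemiring R]

lemma totalDegree_pderiv_le {p : MvPolynomial σ R} {n : ℕ} (h : p.totalDegree ≤ n + 1)
    (i : σ) : (pderiv i p).totalDegree ≤ n := by
  classical
  refine Finset.sup_le fun m hm => ?_
  have hcoeff : coeff (m + Finsupp.single i 1) p ≠ 0 := by
    rw [mem_support_iff, coeff_pderiv] at hm
    exact left_ne_zero_of_mul hm
  have hdeg : (m + Finsupp.single i 1).degree ≤ n + 1 :=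
    (le_totalDegree (mem_support_iff.mpr hcoeff)).trans h
  rw [map_add, Finsupp.degree_single] at hdeg
  change m.degree ≤ n
  omega

lemma homogeneousComponent_pderiv (n : ℕ) (i : σ) (p : MvPolynomial σ R) :
    homogeneousComponent n (pderiv i p) = pderiv i (homogeneousComponent (n + 1) p) := by
  classical
  ext m
  simp only [coeff_pderiv, coeff_homogeneousComponent, map_add, Finsupp.degree_single,
    add_left_inj]
  split_ifs <;> simp

lemma homogeneousComponent_mul_of_totalDegree_le {p q : MvPolynomial σ R} {m n : ℕ}
    (hp : p.totalDegree ≤ m) (hq : q.totalDegree ≤ n) :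
    homogeneousComponent (m + n) (p * q) =
      homogeneousComponent m p * homogeneousComponent n q := by
  classical
  ext d
  rw [coeff_homogeneousComponent]
  split_ifs with hd
  · rw [coeff_mul, coeff_mul]
    refine Finset.sum_congr rfl fun x hx => ?_
    have hx : x.1.degree + x.2.degree = m + n := by
      rw [← map_add, Finset.HasAntidiagonal.mem_antidiagonal.mp hx, hd]
    simp only [coeff_homogeneousComponent]
    by_cases h1 : x.1.degree = m
    · rw [if_pos h1, if_pos (by omega)]
    · rw [if_neg h1, zero_mul]
      rcases lt_or_gt_of_ne h1 with hlt | hgt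
      · rw [coeff_eq_zero_of_totalDegree_lt (d := x.2) (by change _ < x.2.degree; omega),
          mul_zero]
      · rw [coeff_eq_zero_of_totalDegree_lt (d := x.1) (by change _ < x.1.degree; omega),
          zero_mul]
  · exact (((homogeneousComponent_isHomogeneous m p).mul
      (homogeneousComponent_isHomogeneous n q)).coeff_eq_zero hd).symm

lemma homogeneousComponent_prod_of_totalDegree_le {ι : Type*} (s : Finset ι)
    (f : ι → MvPolynomial σ R) (n : ι → ℕ) (h : ∀ i ∈ s, (f i).totalDegree ≤ n i) :
    homogeneousComponent (∑ i ∈ s, n i) (∏ i ∈ s, f i) =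
      ∏ i ∈ s, homogeneousComponent (n i) (f i) := by
  classical
  induction s using Finset.induction_on with
  | empty => simp
  | insert a s ha ih =>
    have hs : ∀ i ∈ s, (f i).totalDegree ≤ n i := fun i hi => h i (Finset.mem_insert_of_mem hi)
    rw [Finset.sum_insert ha, Finset.prod_insert ha, Finset.prod_insert ha,
      homogeneousComponent_mul_of_totalDegree_le (h a (Finset.mem_insert_self a s))
        ((totalDegree_finsetProd _ _).trans (Finset.sum_le_sum hs)), ih hs]

attribute [local instance] MvPolynomial.gradedAlgebra in
lemma IsHomogeneous.homogeneousComponent_add_mul {a : MvPolynomial σ R} {k : ℕ}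
    (ha : a.IsHomogeneous k) (n : ℕ) (p : MvPolynomial σ R) :
    homogeneousComponent (n + k) (a * p) = a * homogeneousComponent n p := by
  classical
  rw [add_comm, ← decomposition.decompose'_apply, ← decomposition.decompose'_apply]
  exact DirectSum.coe_decompose_mul_add_of_left_mem (homogeneousSubmodule σ R) ha

lemma homogeneousComponent_sum_X_mul_pderiv [Fintype σ] (n : ℕ) (p : MvPolynomial σ R) :
    homogeneousComponent n (∑ i, X i * pderiv i p) = n • homogeneousComponent n p := by
  rw [map_sum, ← (homogeneousComponent_isHomogeneous n p).sum_X_mul_pderiv]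
  refine Finset.sum_congr rfl fun i _ => ?_
  cases n with
  | zero =>
    classical
    simp [homogeneousComponent_zero, coeff_X_mul']
  | succ n =>
    rw [(isHomogeneous_X R i).homogeneousComponent_add_mul, homogeneousComponent_pderiv]

end CommSemiring

lemma homogeneousComponent_det_of_totalDegree_le [CommRing R] {ι : Type*} [Fintype ι]
    [DecidableEq ι] (M : Matrix ι ι (MvPolynomial σ R)) {n : ℕ}
    (h : ∀ i j, (M i j).totalDegree ≤ n) :
    homogeneousComponent (Fintype.card ι * n) M.det = (M.map (homogeneousComponent n)).det := by
  have hsum : Fintype.card ι * n = ∑ _i : ι, n := by simp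
  simp only [Matrix.det_apply, map_sum, Units.smul_def, map_zsmul, hsum, Matrix.map_apply]
  exact Finset.sum_congr rfl fun _ _ => by
    rw [homogeneousComponent_prod_of_totalDegree_le _ _ _ fun i _ => h _ _]

end MvPolynomial

lemma homogeneousComponent_eulerOp (n : ℕ) (φ : MvPolynomial (Fin 3) ℝ) :
    homogeneousComponent n (eulerOp φ) = n • homogeneousComponent n φ :=
  homogeneousComponent_sum_X_mul_pderiv n φ

lemma hessDet_homogeneousComponent {φ : MvPolynomial (Fin 3) ℝ} {n : ℕ}
    (h : φ.totalDegree ≤ n + 2) :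
    hessDet (homogeneousComponent (n + 2) φ) = homogeneousComponent (3 * n) (hessDet φ) := by
  have hHess (i j : Fin 3) : (pderiv i (pderiv j φ)).totalDegree ≤ n :=
    totalDegree_pderiv_le (totalDegree_pderiv_le h j) i
  rw [hessDet, hessDet, show 3 * n = Fintype.card (Fin 3) * n by simp,
    homogeneousComponent_det_of_totalDegree_le
      (Matrix.of fun i j : Fin 3 => pderiv i (pderiv j φ)) hHess]
  congr
  ext i j
  simp [homogeneousComponent_pderiv]

lemma IsTNKSolution.homogeneousComponent_hessDet_eq_zero {φ : MvPolynomial (Fin 3) ℝ}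
    (h : IsTNKSolution φ) {n : ℕ} (hn : φ.totalDegree < n) :
    homogeneousComponent n (hessDet φ) = 0 := by
  rw [h, map_add, map_sub, homogeneousComponent_C_mul, homogeneousComponent_C_mul,
    homogeneousComponent_eulerOp, homogeneousComponent_eulerOp, homogeneousComponent_eulerOp,
    homogeneousComponent_eq_zero n φ hn]
  simp

/-- If `φ` has degree `d ≥ 4` and satisfies the toric nearly Kähler equation, the Hessian
determinant of its top-degree homogeneous component vanishes identically. -/
theorem hessDet_top_component_eq_zero (φ : MvPolynomial (Fin 3) ℝ) (d : ℕ) (hd : 4 ≤ d)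
    (hdeg : φ.totalDegree = d) (hTNK : IsTNKSolution φ) :
    hessDet (homogeneousComponent d φ) = 0 := by
  obtain ⟨n, rfl⟩ : ∃ n, d = n + 2 := ⟨d - 2, by omega⟩
  rw [hessDet_homogeneousComponent hdeg.le]
  exact hTNK.homogeneousComponent_hessDet_eq_zero (by omega)
end

section
/- There do not exist t₀ > 0 and a differentiable function x : [t₀, ∞) → ℝ such that x(t) > 2t·x'(t) and x'(t) > √(2t) for all t ≥ t₀. In other words, a solution of the radial constraints x > 2t·x' and x' > √(2t) cannot exist on an unbounded interval [t₀, ∞); the right endpoint t₊ of any maximal interval of validity of the constraints is finite. -/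
/-!
The constraint `x > 2t·x'` makes `x / √t` decreasing, so `x` grows at most like `√t`, while
`x' > √(2t) ≥ √(2t₀)` makes `x` grow at least linearly. A linear function eventually beats
any multiple of `√t`.
-/

open Set Real

section HalfLine

variable {f f' : ℝ → ℝ} {a : ℝ}

lemma monotoneOn_Ici_of_hasDerivWithinAt_nonneg
    (hf : ∀ t, a ≤ t → HasDerivWithinAt f (f' t) (Ici a) t) (h : ∀ t, a < t → 0 ≤ f' t) :
    MonotoneOn f (Ici a) := by
  refine monotoneOn_of_hasDerivWithinAt_nonneg (f' := f') (convex_Ici a)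
    (fun t ht ↦ (hf t ht).continuousWithinAt) (fun t ht ↦ ?_) (fun t ht ↦ ?_)
  · rw [interior_Ici] at ht ⊢
    exact (hf t ht.le).mono Ioi_subset_Ici_self
  · rw [interior_Ici] at ht
    exact h t ht

lemma mul_sub_le_sub_of_le_hasDerivWithinAt
    (hf : ∀ t, a ≤ t → HasDerivWithinAt f (f' t) (Ici a) t) {c : ℝ} (hc : ∀ t, a < t → c ≤ f' t)
    {t : ℝ} (ht : a ≤ t) : c * (t - a) ≤ f t - f a := by
  have hmono : MonotoneOn (fun s ↦ f s - s * c) (Ici a) :=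
    monotoneOn_Ici_of_hasDerivWithinAt_nonneg (f' := fun s ↦ f' s - c)
      (fun s hs ↦ (hf s hs).sub (hasDerivAt_mul_const c).hasDerivWithinAt)
      (fun s hs ↦ sub_nonneg.2 (hc s hs))
  have : f a - a * c ≤ f t - t * c := hmono self_mem_Ici ht ht
  linarith

lemma le_div_sqrt_mul_sqrt_of_two_mul_deriv_le (ha : 0 < a)
    (hf : ∀ t, a ≤ t → HasDerivWithinAt f (f' t) (Ici a) t) (h : ∀ t, a < t → 2 * t * f' t ≤ f t)
    {t : ℝ} (ht : a ≤ t) : f t ≤ f a / √a * √t := by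
  have hdecr : MonotoneOn (fun s ↦ -(f s / √s)) (Ici a) := by
    refine monotoneOn_Ici_of_hasDerivWithinAt_nonneg
      (f' := fun s ↦ -((f' s * √s - f s * (1 / (2 * √s))) / √s ^ 2))
      (fun s hs ↦ ?_) (fun s hs ↦ ?_)
    · have hs0 : 0 < s := ha.trans_le hs
      exact ((hf s hs).div (hasDerivAt_sqrt hs0.ne').hasDerivWithinAt (sqrt_pos.2 hs0).ne').neg
    · have hs0 : 0 < s := ha.trans hs
      have hmul : √s * √s = s := mul_self_sqrt hs0.le
      rw [neg_nonneg, div_nonpos_iff]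
      refine Or.inr ⟨?_, by positivity⟩
      rw [sub_nonpos, mul_one_div, le_div_iff₀ (by positivity)]
      have hexpand : f' s * √s * (2 * √s) = 2 * s * f' s := by linear_combination 2 * f' s * hmul
      linarith [h s hs]
  have hle := neg_le_neg_iff.1 (hdecr self_mem_Ici ht ht)
  have hta : 0 < √t := sqrt_pos.2 (ha.trans_le ht)
  rwa [div_le_iff₀ hta] at hle

end HalfLine

lemma exists_mul_sqrt_lt_add_mul_sub {c : ℝ} (hc : 0 < c) (a b C : ℝ) :
    ∃ t, a ≤ t ∧ C * √t < b + c * (t - a) := by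
  set t := max (max a 0) ((C ^ 2 - 2 * c * b + 2 * c ^ 2 * a) / c ^ 2 + 1)
  have hta : max a 0 ≤ t := le_max_left _ _
  have hc2 : 0 < c ^ 2 := by positivity
  have ht : C ^ 2 - 2 * c * b + 2 * c ^ 2 * a < c ^ 2 * t := by
    have : (C ^ 2 - 2 * c * b + 2 * c ^ 2 * a) / c ^ 2 + 1 ≤ t := le_max_right _ _
    rw [div_add_one hc2.ne', div_le_iff₀ hc2] at this
    linarith
  have hsq : √t ^ 2 = t := sq_sqrt ((le_max_right a 0).trans hta)
  refine ⟨t, (le_max_left a 0).trans hta, ?_⟩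
  -- AM–GM: `2 c C √t ≤ c² t + C²`
  nlinarith [sq_nonneg (c * √t - C)]

/-- The radial constraints `x > 2t·x'` and `x' > √(2t)` cannot hold on an unbounded
interval `[t₀, ∞)` with `t₀ > 0`: the right endpoint of any maximal interval of validity
is finite. -/
theorem no_global_radial_solution :
    ¬ ∃ (t₀ : ℝ) (x x' : ℝ → ℝ), 0 < t₀ ∧
        (∀ t : ℝ, t₀ ≤ t → HasDerivWithinAt x (x' t) (Set.Ici t₀) t) ∧
        (∀ t : ℝ, t₀ ≤ t → 2 * t * x' t < x t) ∧
        (∀ t : ℝ, t₀ ≤ t → Real.sqrt (2 * t) < x' t) := by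
  rintro ⟨t₀, x, x', ht₀, hx, hup, hlo⟩
  obtain ⟨t, ht, hlt⟩ := exists_mul_sqrt_lt_add_mul_sub (sqrt_pos.2 (by positivity : 0 < 2 * t₀))
    t₀ (x t₀) (x t₀ / √t₀)
  have hlow := mul_sub_le_sub_of_le_hasDerivWithinAt hx
    (fun s hs ↦ (sqrt_le_sqrt (by linarith : 2 * t₀ ≤ 2 * s)).trans (hlo s hs.le).le) ht
  have hhigh := le_div_sqrt_mul_sqrt_of_two_mul_deriv_le ht₀ hx (fun s hs ↦ (hup s hs.le).le) ht
  linarith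
end

section
/- Let I ⊆ (0,∞) be an open interval and let x : I → ℝ be twice differentiable, satisfying the radial toric nearly Kähler ODE 3(x'(t)² − 2t)(x'(t) + 2t·x''(t)) = 8(x(t) − 2t·x'(t)) and x'(t)² ≠ 2t for all t ∈ I. Then the function E(t) := x(t) − 2t·x'(t) satisfies E'(t) = −(8/3)·E(t)/(x'(t)² − 2t) for all t ∈ I. In particular, if in addition E(t) > 0 and x'(t)² > 2t on I, then E is strictly decreasing on I. -/
open Set

/-!
Differentiating `E = x - 2t·x'` gives `E' = -(x' + 2t·x'')`, and the ODE expresses exactly this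
combination as `8E / (3(x'² - 2t))`. Once `E > 0` and `x'² > 2t`, the derivative is negative.
-/

theorem hasDerivAt_sub_two_mul_mul {x y : ℝ → ℝ} {t y₂ : ℝ} (hx : HasDerivAt x (y t) t)
    (hy : HasDerivAt y y₂ t) :
    HasDerivAt (fun s => x s - 2 * s * y s) (-(y t + 2 * t * y₂)) t := by
  have h2s : HasDerivAt (fun s : ℝ => 2 * s) 2 t := by
    simpa using (hasDerivAt_id t).const_mul (2 : ℝ)
  have h := hx.sub (h2s.mul hy)
  rwa [show y t - (2 * y t + 2 * t * y₂) = -(y t + 2 * t * y₂) by ring] at h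

theorem neg_eq_of_three_mul_mul_eq_eight_mul {D q e : ℝ} (hD : D ≠ 0) (h : 3 * D * q = 8 * e) :
    -q = -(8 / 3) * e / D := by
  field_simp
  linarith

theorem strictAntiOn_Ioo_of_hasDerivAt_neg {a b : ℝ} {f f' : ℝ → ℝ}
    (hf : ∀ t ∈ Ioo a b, HasDerivAt f (f' t) t) (hf' : ∀ t ∈ Ioo a b, f' t < 0) :
    StrictAntiOn f (Ioo a b) :=
  strictAntiOn_of_hasDerivWithinAt_neg (convex_Ioo a b)
    (fun t ht => (hf t ht).continuousAt.continuousWithinAt)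
    (fun t ht => by
      rw [interior_Ioo] at ht ⊢
      exact (hf t ht).hasDerivWithinAt)
    (fun t ht => by
      rw [interior_Ioo] at ht
      exact hf' t ht)

theorem radial_ode_epsilon_decreasing_general (a b : ℝ)
    (x x' x'' : ℝ → ℝ)
    (hx' : ∀ t ∈ Set.Ioo a b, HasDerivAt x (x' t) t)
    (hx'' : ∀ t ∈ Set.Ioo a b, HasDerivAt x' (x'' t) t)
    (hode : ∀ t ∈ Set.Ioo a b,
      3 * ((x' t) ^ 2 - 2 * t) * (x' t + 2 * t * x'' t) = 8 * (x t - 2 * t * x' t))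
    (hne : ∀ t ∈ Set.Ioo a b, (x' t) ^ 2 ≠ 2 * t) :
    (∀ t ∈ Set.Ioo a b,
        HasDerivAt (fun s => x s - 2 * s * x' s)
          (-(8 / 3) * (x t - 2 * t * x' t) / ((x' t) ^ 2 - 2 * t)) t) ∧
      ((∀ t ∈ Set.Ioo a b, 0 < x t - 2 * t * x' t ∧ 2 * t < (x' t) ^ 2) →
        StrictAntiOn (fun s => x s - 2 * s * x' s) (Set.Ioo a b)) := by
  have hE : ∀ t ∈ Ioo a b, HasDerivAt (fun s => x s - 2 * s * x' s)
      (-(8 / 3) * (x t - 2 * t * x' t) / ((x' t) ^ 2 - 2 * t)) t := fun t ht =>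
    neg_eq_of_three_mul_mul_eq_eight_mul (sub_ne_zero.mpr (hne t ht)) (hode t ht) ▸
      hasDerivAt_sub_two_mul_mul (hx' t ht) (hx'' t ht)
  refine ⟨hE, fun hpos => strictAntiOn_Ioo_of_hasDerivAt_neg hE fun t ht => ?_⟩
  obtain ⟨hE_pos, hD_pos⟩ := hpos t ht
  exact div_neg_of_neg_of_pos (by linarith) (by linarith)

/-- On an open interval `I = (a,b) ⊆ (0,∞)`, a twice differentiable solution of the radial
toric nearly Kähler ODE `3(x'² − 2t)(x' + 2t·x'') = 8(x − 2t·x')` with `x'² ≠ 2t` satisfies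
`E' = −(8/3)·E/(x'² − 2t)` for `E = x − 2t·x'`; in particular `E` is strictly decreasing on
`I` whenever additionally `E > 0` and `x'² > 2t` on `I`. -/
theorem radial_ode_epsilon_decreasing (a b : ℝ) (hab : Set.Ioo a b ⊆ Set.Ioi (0 : ℝ))
    (x x' x'' : ℝ → ℝ)
    (hx' : ∀ t ∈ Set.Ioo a b, HasDerivAt x (x' t) t)
    (hx'' : ∀ t ∈ Set.Ioo a b, HasDerivAt x' (x'' t) t)
    (hode : ∀ t ∈ Set.Ioo a b,
      3 * ((x' t) ^ 2 - 2 * t) * (x' t + 2 * t * x'' t) = 8 * (x t - 2 * t * x' t))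
    (hne : ∀ t ∈ Set.Ioo a b, (x' t) ^ 2 ≠ 2 * t) :
    (∀ t ∈ Set.Ioo a b,
        HasDerivAt (fun s => x s - 2 * s * x' s)
          (-(8 / 3) * (x t - 2 * t * x' t) / ((x' t) ^ 2 - 2 * t)) t) ∧
      ((∀ t ∈ Set.Ioo a b, 0 < x t - 2 * t * x' t ∧ 2 * t < (x' t) ^ 2) →
        StrictAntiOn (fun s => x s - 2 * s * x' s) (Set.Ioo a b)) :=
  radial_ode_epsilon_decreasing_general a b x x' x'' hx' hx'' hode hne
end
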